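/- Let G be the group with presentation ⟨s₁,s₂,s₃,h | [sₖ,h] for 1≤k≤3, s₁²h, s₂⁴h, s₃⁴h, s₁s₂s₃h⟩, and let φ₃ : G → ℤ/2 be the epimorphism with φ₃(s₁)=0, φ₃(s₂)=φ₃(s₃)=1, φ₃(h)=0. Then φ₃ factors through ℤ via the homomorphism ψ with ψ(s₁)=2, ψ(s₂)=ψ(s₃)=1, ψ(h)=-4. -/

import Mathlib

open FreeGroup

/-- Relators of π₁(M₄) = ⟨s₁,s₂,s₃,h | [sₖ,h] (1≤k≤3), s₁²h, s₂⁴h, s₃⁴h, s₁s₂s₃h⟩,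
generators s₁=0, s₂=1, s₃=2, h=3. -/
def relsM4 : Set (FreeGroup (Fin 4)) :=
  { of 0 * of 3 * (of 0)⁻¹ * (of 3)⁻¹,
    of 1 * of 3 * (of 1)⁻¹ * (of 3)⁻¹,
    of 2 * of 3 * (of 2)⁻¹ * (of 3)⁻¹,
    of 0 ^ 2 * of 3, of 1 ^ 4 * of 3, of 2 ^ 4 * of 3,
    of 0 * of 1 * of 2 * of 3 }

/-- Reduction mod 2, multiplicatively. -/
def mod2 : Multiplicative ℤ →* Multiplicative (ZMod 2) :=
  AddMonoidHom.toMultiplicative (Int.castAddHom (ZMod 2))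

def psiGen : Fin 4 → Multiplicative ℤ :=
  ![.ofAdd 2, .ofAdd 1, .ofAdd 1, .ofAdd (-4)]

/-- ℤ is abelian, so only the relators without commutators matter: `2·2 - 4 = 4·1 - 4 = 2 + 1 + 1 - 4 = 0`. -/
theorem lift_psiGen_eq_one_of_mem_relsM4 : ∀ r ∈ relsM4, FreeGroup.lift psiGen r = 1 := by
  rintro r (rfl | rfl | rfl | rfl | rfl | rfl | rfl) <;>
    simp [psiGen, ← ofAdd_add, ← ofAdd_neg] <;> decide

def psiM4 : PresentedGroup relsM4 →* Multiplicative ℤ :=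
  PresentedGroup.toGroup lift_psiGen_eq_one_of_mem_relsM4

@[simp]
theorem psiM4_of (i : Fin 4) : psiM4 (PresentedGroup.of i) = psiGen i :=
  PresentedGroup.toGroup.of _

/-- The epimorphism φ₃ of π₁(M₄) with values (0,1,1,0) on (s₁,s₂,s₃,h) factors
through ℤ via ψ with ψ(s₁)=2, ψ(s₂)=ψ(s₃)=1, ψ(h)=-4. -/
theorem stmt8 (φ : PresentedGroup relsM4 →* Multiplicative (ZMod 2))
    (h1 : φ (PresentedGroup.of 0) = Multiplicative.ofAdd (0 : ZMod 2))
    (h2 : φ (PresentedGroup.of 1) = Multiplicative.ofAdd (1 : ZMod 2))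
    (h3 : φ (PresentedGroup.of 2) = Multiplicative.ofAdd (1 : ZMod 2))
    (h4 : φ (PresentedGroup.of 3) = Multiplicative.ofAdd (0 : ZMod 2)) :
    ∃ ψ : PresentedGroup relsM4 →* Multiplicative ℤ,
      ψ (PresentedGroup.of 0) = Multiplicative.ofAdd (2 : ℤ) ∧
      ψ (PresentedGroup.of 1) = Multiplicative.ofAdd (1 : ℤ) ∧
      ψ (PresentedGroup.of 2) = Multiplicative.ofAdd (1 : ℤ) ∧
      ψ (PresentedGroup.of 3) = Multiplicative.ofAdd (-4 : ℤ) ∧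
      φ = mod2.comp ψ := by
  refine ⟨psiM4, rfl, rfl, rfl, rfl, PresentedGroup.ext fun i => ?_⟩
  fin_cases i <;> simp [h1, h2, h3, h4, psiGen, mod2] <;> decide
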